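/- There is a constant C > 0 depending only on n such that C⁻¹·V(Ω) ≤ ∫₀^d h·φ² ≤ C·V(Ω) and C⁻¹·V(Ω) ≤ ∫₀^d h·(φ')² ≤ C·V(Ω). -/

import Mathlib

open MeasureTheory Real Set

/-- The first nonzero Neumann eigenvalue `μ₁(N)` of the weighted interval
`N = ([0,d], h dx)`, defined variationally via the weighted Rayleigh quotient. -/
noncomputable def mu1N (d : ℝ) (h : ℝ → ℝ) : ℝ :=
  sInf { r : ℝ | ∃ f : ℝ → ℝ, ContDiff ℝ 1 f ∧
    (∫ x in (0:ℝ)..d, h x * f x) = 0 ∧ (∫ x in (0:ℝ)..d, h x * (f x) ^ 2) ≠ 0 ∧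
    r = (∫ x in (0:ℝ)..d, h x * (deriv f x) ^ 2) / (∫ x in (0:ℝ)..d, h x * (f x) ^ 2) }

/-- `φ ∈ C¹[0,d] ∩ C^∞(0,d)` solves the weighted Neumann ODE
`-(hφ')' = μ₁(N) hφ` on `(0,d)` with `φ(0) = -1`, `φ'(0) = φ'(d) = 0`. -/
def IsNeumannODESol (d : ℝ) (h φ : ℝ → ℝ) : Prop :=
  ContDiffOn ℝ 1 φ (Icc 0 d) ∧ ContDiffOn ℝ (⊤ : ℕ∞) φ (Ioo 0 d) ∧
  (∀ x ∈ Ioo 0 d,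
    HasDerivAt (fun t => h t * derivWithin φ (Icc 0 d) t)
      (-(mu1N d h * (h x * φ x))) x) ∧
  φ 0 = -1 ∧ derivWithin φ (Icc 0 d) 0 = 0 ∧ derivWithin φ (Icc 0 d) d = 0

namespace Lemma35

/-- FTC helper. -/
lemma ftc {f f' : ℝ → ℝ} {a b : ℝ} (hab : a ≤ b) (hcont : ContinuousOn f (Icc a b))
    (hderiv : ∀ x ∈ Ioo a b, HasDerivAt f (f' x) x)
    (hint : IntervalIntegrable f' MeasureTheory.volume a b) :
    ∫ y in a..b, f' y = f b - f a :=
  intervalIntegral.integral_eq_sub_of_hasDeriv_right_of_le hab hcont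
    (fun x hx => (hderiv x hx).hasDerivWithinAt) hint

lemma ii {d : ℝ} {f : ℝ → ℝ} (hf : ContinuousOn f (Icc 0 d)) {a b : ℝ}
    (ha : a ∈ Icc 0 d) (hb : b ∈ Icc 0 d) : IntervalIntegrable f MeasureTheory.volume a b :=
  (hf.mono (uIcc_subset_Icc ha hb)).intervalIntegrable

open intervalIntegral in
lemma intid {a b : ℝ} : ∫ x in a..b, (x:ℝ) = (b^2 - a^2)/2 := integral_id

structure Setup (m : ℕ) (d : ℝ) (h φ : ℝ → ℝ) : Prop where
  hd0 : 0 < d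
  hd2 : d ≤ 2
  hcont : ContinuousOn h (Icc 0 d)
  hnn : ∀ x ∈ Icc 0 d, 0 ≤ h x
  hpos : ∀ x ∈ Ioo 0 d, 0 < h x
  hconc : ConcaveOn ℝ (Icc 0 d) (fun x => h x ^ ((1 : ℝ) / (m + 1)))
  hmul : π ^ 2 / 4 ≤ mu1N d h
  hmuu : mu1N d h ≤ 25
  hsol : IsNeumannODESol d h φ

namespace Setup

variable {m : ℕ} {d : ℝ} {h φ : ℝ → ℝ}

lemma phiC1 (S : Setup m d h φ) : ContDiffOn ℝ 1 φ (Icc 0 d) := S.hsol.1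
lemma ode (S : Setup m d h φ) : ∀ x ∈ Ioo 0 d,
    HasDerivAt (fun t => h t * derivWithin φ (Icc 0 d) t)
      (-(mu1N d h * (h x * φ x))) x := S.hsol.2.2.1
lemma phi0 (S : Setup m d h φ) : φ 0 = -1 := S.hsol.2.2.2.1
lemma dphi0 (S : Setup m d h φ) : derivWithin φ (Icc 0 d) 0 = 0 := S.hsol.2.2.2.2.1
lemma dphid (S : Setup m d h φ) : derivWithin φ (Icc 0 d) d = 0 := S.hsol.2.2.2.2.2

lemma contphi (S : Setup m d h φ) : ContinuousOn φ (Icc 0 d) := S.phiC1.continuousOn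
lemma contdphi (S : Setup m d h φ) : ContinuousOn (derivWithin φ (Icc 0 d)) (Icc 0 d) :=
  S.phiC1.continuousOn_derivWithin (uniqueDiffOn_Icc S.hd0) le_rfl

lemma mu_ge (S : Setup m d h φ) : 2 ≤ mu1N d h := by
  have h3 := Real.pi_gt_three
  nlinarith [S.hmul]

lemma mu_pos (S : Setup m d h φ) : 0 < mu1N d h := lt_of_lt_of_le two_pos S.mu_ge

lemma mem0 (S : Setup m d h φ) : (0:ℝ) ∈ Icc 0 d := ⟨le_rfl, S.hd0.le⟩
lemma memd (S : Setup m d h φ) : d ∈ Icc 0 d := ⟨S.hd0.le, le_rfl⟩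

lemma hasDerivAt_phi (S : Setup m d h φ) {x : ℝ} (hx : x ∈ Ioo 0 d) :
    HasDerivAt φ (derivWithin φ (Icc 0 d) x) x := by
  have hd : DifferentiableWithinAt ℝ φ (Icc 0 d) x :=
    (S.phiC1.differentiableOn one_ne_zero) x (Ioo_subset_Icc_self hx)
  exact hd.hasDerivWithinAt.hasDerivAt (Icc_mem_nhds hx.1 hx.2)

/-- g(x) = -μ ∫₀ˣ hφ -/
lemma gval (S : Setup m d h φ) {x : ℝ} (hx : x ∈ Icc 0 d) :
    h x * derivWithin φ (Icc 0 d) x = -(mu1N d h) * ∫ t in (0:ℝ)..x, h t * φ t := by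
  rcases eq_or_lt_of_le hx.1 with h0 | h0
  · rw [← h0]
    simp [S.dphi0]
  · have hsub : Icc (0:ℝ) x ⊆ Icc 0 d := Icc_subset_Icc le_rfl hx.2
    have hcontg : ContinuousOn (fun t => h t * derivWithin φ (Icc 0 d) t) (Icc 0 x) :=
      (S.hcont.mul S.contdphi).mono hsub
    have hcont' : ContinuousOn (fun t => -(mu1N d h * (h t * φ t))) (Icc 0 d) :=
      (ContinuousOn.mul continuousOn_const (S.hcont.mul S.contphi)).neg
    have hftc := ftc h0.le hcontg
      (fun t ht => S.ode t ⟨ht.1, lt_of_lt_of_le ht.2 hx.2⟩)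
      (ii hcont' S.mem0 hx)
    have e0 : h 0 * derivWithin φ (Icc 0 d) 0 = 0 := by simp [S.dphi0]
    have : ∫ t in (0:ℝ)..x, -(mu1N d h * (h t * φ t))
        = -(mu1N d h) * ∫ t in (0:ℝ)..x, h t * φ t := by
      simp_rw [show ∀ t, -(mu1N d h * (h t * φ t)) = -(mu1N d h) * (h t * φ t) from fun t => by ring]
      exact intervalIntegral.integral_const_mul _ _
    rw [hftc, e0, sub_zero] at this
    exact this

lemma int_hphi (S : Setup m d h φ) : (∫ t in (0:ℝ)..d, h t * φ t) = 0 := by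
  have hg := S.gval S.memd
  rw [S.dphid, mul_zero] at hg
  rcases mul_eq_zero.mp hg.symm with h1 | h2
  · exact absurd (neg_eq_zero.mp h1) (ne_of_gt S.mu_pos)
  · exact h2

lemma gval2 (S : Setup m d h φ) {x : ℝ} (hx : x ∈ Icc 0 d) :
    h x * derivWithin φ (Icc 0 d) x = mu1N d h * ∫ t in x..d, h t * φ t := by
  have hadd : (∫ t in (0:ℝ)..x, h t * φ t) + (∫ t in x..d, h t * φ t)
      = ∫ t in (0:ℝ)..d, h t * φ t :=
    intervalIntegral.integral_add_adjacent_intervals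
      (ii (S.hcont.mul S.contphi) S.mem0 hx) (ii (S.hcont.mul S.contphi) hx S.memd)
  rw [S.int_hphi] at hadd
  rw [S.gval hx]
  have : (∫ t in (0:ℝ)..x, h t * φ t) = -∫ t in x..d, h t * φ t := by linarith
  rw [this]; ring

/-- partial energy identity -/
lemma Epartial (S : Setup m d h φ) {b : ℝ} (hb : b ∈ Icc 0 d)
    (hgb : h b * derivWithin φ (Icc 0 d) b = 0) :
    (∫ t in (0:ℝ)..b, h t * (derivWithin φ (Icc 0 d) t)^2)
      = mu1N d h * ∫ t in (0:ℝ)..b, h t * (φ t)^2 := by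
  rcases eq_or_lt_of_le hb.1 with h0 | h0
  · rw [← h0]; simp
  · set μ := mu1N d h
    set φd := derivWithin φ (Icc 0 d) with hφd
    have hsub : Icc (0:ℝ) b ⊆ Icc 0 d := Icc_subset_Icc le_rfl hb.2
    have hcontG : ContinuousOn (fun t => (h t * φd t) * φ t) (Icc 0 b) :=
      ((S.hcont.mul S.contdphi).mul S.contphi).mono hsub
    have hcont' : ContinuousOn
        (fun t => -(μ * (h t * φ t)) * φ t + (h t * φd t) * φd t) (Icc 0 d) := by
      exact ((ContinuousOn.mul continuousOn_const (S.hcont.mul S.contphi)).neg.mul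
        S.contphi).add ((S.hcont.mul S.contdphi).mul S.contdphi)
    have hderiv : ∀ t ∈ Ioo 0 b, HasDerivAt (fun t => (h t * φd t) * φ t)
        (-(μ * (h t * φ t)) * φ t + (h t * φd t) * φd t) t := by
      intro t ht
      have ht' : t ∈ Ioo 0 d := ⟨ht.1, lt_of_lt_of_le ht.2 hb.2⟩
      exact (S.ode t ht').mul (S.hasDerivAt_phi ht')
    have hftc := ftc h0.le hcontG hderiv (ii hcont' S.mem0 hb)
    have e0 : (h 0 * φd 0) * φ 0 = 0 := by simp [hφd, S.dphi0]
    rw [e0, hgb, zero_mul, sub_zero] at hftc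
    have hsplit : (∫ t in (0:ℝ)..b, -(μ * (h t * φ t)) * φ t + (h t * φd t) * φd t)
        = (∫ t in (0:ℝ)..b, -(μ * (h t * φ t)) * φ t)
          + ∫ t in (0:ℝ)..b, (h t * φd t) * φd t := by
      apply intervalIntegral.integral_add
      · exact ii ((ContinuousOn.mul continuousOn_const (S.hcont.mul S.contphi)).neg.mul
          S.contphi) S.mem0 hb
      · exact ii ((S.hcont.mul S.contdphi).mul S.contdphi) S.mem0 hb
    rw [hsplit] at hftc
    have e1 : (∫ t in (0:ℝ)..b, -(μ * (h t * φ t)) * φ t)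
        = -μ * ∫ t in (0:ℝ)..b, h t * (φ t)^2 := by
      simp_rw [show ∀ t, -(μ * (h t * φ t)) * φ t = -μ * (h t * (φ t)^2) from fun t => by ring]
      exact intervalIntegral.integral_const_mul _ _
    have e2 : (∫ t in (0:ℝ)..b, (h t * φd t) * φd t)
        = ∫ t in (0:ℝ)..b, h t * (φd t)^2 := by
      congr 1; funext t; ring
    rw [e1, e2] at hftc
    linarith

end Setup

section
variable {m : ℕ} {d : ℝ} {h φ : ℝ → ℝ}

-- standalone versions (will merge into Setup): hypotheses named explicitly
variable (hd0 : 0 < d) (hd2 : d ≤ 2)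
  (hcont : ContinuousOn h (Icc 0 d))
  (hnn : ∀ x ∈ Icc 0 d, 0 ≤ h x)
  (hconc : ConcaveOn ℝ (Icc 0 d) (fun x => h x ^ ((1 : ℝ) / (m + 1))))

include hnn in
lemma qpow {z : ℝ} (hz : z ∈ Icc 0 d) :
    (h z ^ ((1:ℝ)/(m+1))) ^ (m+1) = h z := by
  rw [← Real.rpow_natCast (h z ^ ((1:ℝ)/(m+1))) (m+1), ← Real.rpow_mul (hnn z hz)]
  rw [show (1:ℝ)/(m+1) * ((m+1:ℕ):ℝ) = 1 by push_cast; field_simp]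
  exact Real.rpow_one _

include hnn in
lemma hq_mul {a b c : ℝ} (ha : a ∈ Icc 0 d) (hb : b ∈ Icc 0 d) (hc : 0 ≤ c)
    (hineq : c * (h b ^ ((1:ℝ)/(m+1))) ≤ h a ^ ((1:ℝ)/(m+1))) :
    c ^ (m+1) * h b ≤ h a := by
  have hbq : 0 ≤ h b ^ ((1:ℝ)/(m+1)) := Real.rpow_nonneg (hnn b hb) _
  have := pow_le_pow_left₀ (mul_nonneg hc hbq) hineq (m+1)
  rw [mul_pow, qpow hnn hb, qpow hnn ha] at this
  exact this

include hnn hconc in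
lemma P1 {x y : ℝ} (hx : 0 ≤ x) (hxy : x ≤ y) (hy : y ≤ d) :
    x ^ (m+1) * h y ≤ y ^ (m+1) * h x := by
  rcases eq_or_lt_of_le (hx.trans hxy) with h0 | h0
  · have hx0 : x = 0 := le_antisymm (hxy.trans h0.symm.le) hx
    rw [hx0, ← h0]
  · -- y > 0
    have hy0 : (0:ℝ) < y := h0
    have hymem : y ∈ Icc 0 d := ⟨hy0.le, hy⟩
    have h0mem : (0:ℝ) ∈ Icc 0 d := ⟨le_rfl, (hy0.trans_le hy).le⟩
    have hxmem : x ∈ Icc 0 d := ⟨hx, hxy.trans hy⟩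
    set c : ℝ := x / y with hc
    have hc0 : 0 ≤ c := div_nonneg hx hy0.le
    have hc1 : c ≤ 1 := (div_le_one hy0).mpr hxy
    have hcomb := hconc.2 h0mem hymem (by linarith : (0:ℝ) ≤ 1 - c) hc0 (by ring)
    simp only [smul_eq_mul, mul_zero, zero_add] at hcomb
    rw [show c * y = x from by rw [hc]; field_simp] at hcomb
    have hq0 : 0 ≤ h 0 ^ ((1:ℝ)/(m+1)) := Real.rpow_nonneg (hnn 0 h0mem) _
    have hineq : c * (h y ^ ((1:ℝ)/(m+1))) ≤ h x ^ ((1:ℝ)/(m+1)) := by nlinarith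
    have := hq_mul hnn hxmem hymem hc0 hineq
    have := mul_le_mul_of_nonneg_left this (pow_nonneg hy0.le (m+1))
    calc x ^ (m+1) * h y = y ^ (m+1) * (c ^ (m+1) * h y) := by
          rw [hc, div_pow]; field_simp
      _ ≤ y ^ (m+1) * h x := this

include hnn hconc in
lemma P2 {x y : ℝ} (hy : 0 ≤ y) (hxy : y ≤ x) (hx : x ≤ d) :
    (d - x) ^ (m+1) * h y ≤ (d - y) ^ (m+1) * h x := by
  rcases eq_or_lt_of_le (hxy.trans hx) with h0 | h0
  · have : x = d := le_antisymm hx (by rw [← h0]; exact hxy)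
    rw [this, ← h0]
  · -- y < d
    have hymem : y ∈ Icc 0 d := ⟨hy, hxy.trans hx⟩
    have hdmem : d ∈ Icc 0 d := ⟨hy.trans (hxy.trans hx), le_rfl⟩
    have hxmem : x ∈ Icc 0 d := ⟨hy.trans hxy, hx⟩
    set c : ℝ := (d - x) / (d - y) with hc
    have hdy : (0:ℝ) < d - y := by linarith
    have hc0 : 0 ≤ c := div_nonneg (by linarith) hdy.le
    have hc1 : c ≤ 1 := (div_le_one hdy).mpr (by linarith)
    have hcomb := hconc.2 hymem hdmem hc0 (by linarith : (0:ℝ) ≤ 1 - c) (by ring)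
    simp only [smul_eq_mul] at hcomb
    rw [show c * y + (1 - c) * d = x from by rw [hc]; field_simp; ring] at hcomb
    have hqd : 0 ≤ h d ^ ((1:ℝ)/(m+1)) := Real.rpow_nonneg (hnn d hdmem) _
    have hineq : c * (h y ^ ((1:ℝ)/(m+1))) ≤ h x ^ ((1:ℝ)/(m+1)) := by nlinarith
    have := hq_mul hnn hxmem hymem hc0 hineq
    have := mul_le_mul_of_nonneg_left this (pow_nonneg hdy.le (m+1))
    calc (d - x) ^ (m+1) * h y = (d - y) ^ (m+1) * (c ^ (m+1) * h y) := by
          rw [hc, div_pow]; field_simp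
      _ ≤ (d - y) ^ (m+1) * h x := this

end




section
variable {m : ℕ} {d : ℝ} {h : ℝ → ℝ}
variable (hd0 : 0 < d) (hd2 : d ≤ 2)
  (hcont : ContinuousOn h (Icc 0 d))
  (hnn : ∀ x ∈ Icc 0 d, 0 ≤ h x)
  (hpos : ∀ x ∈ Ioo 0 d, 0 < h x)
  (P1 : ∀ {x y : ℝ}, 0 ≤ x → x ≤ y → y ≤ d → x ^ (m+1) * h y ≤ y ^ (m+1) * h x)
  (P2 : ∀ {x y : ℝ}, 0 ≤ y → y ≤ x → x ≤ d → (d - x) ^ (m+1) * h y ≤ (d - y) ^ (m+1) * h x)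

include hd0 hcont hpos in
lemma Vpos : 0 < ∫ t in (0:ℝ)..d, h t :=
  intervalIntegral.intervalIntegral_pos_of_pos_on
    (ii hcont ⟨le_rfl, hd0.le⟩ ⟨hd0.le, le_rfl⟩) hpos hd0

include hd0 hcont hnn P2 in
lemma L8 {x : ℝ} (hx0 : 0 < x) (hx2 : x ≤ d/2) :
    (∫ t in (0:ℝ)..x, h t) ≤ 2^(m+1) * x * h x := by
  have hxd : x < d := lt_of_le_of_lt hx2 (by linarith)
  have hxm : x ∈ Icc 0 d := ⟨hx0.le, hxd.le⟩
  have hdx : (0:ℝ) < d - x := by linarith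
  have key : ∀ t ∈ Icc (0:ℝ) x, h t ≤ 2^(m+1) * h x := by
    intro t ht
    have h1 := P2 ht.1 ht.2 hxd.le
    have h2 : (d - t) ^ (m+1) ≤ (2*(d-x)) ^ (m+1) := by
      apply pow_le_pow_left₀ (by linarith [ht.1, ht.2] : (0:ℝ) ≤ d - t)
      linarith [ht.1]
    have hhx : 0 ≤ h x := hnn x hxm
    have h3 : (d - x) ^ (m+1) * h t ≤ (2*(d-x))^(m+1) * h x :=
      h1.trans (mul_le_mul_of_nonneg_right h2 hhx)
    rw [mul_pow] at h3
    have hp : (0:ℝ) < (d - x) ^ (m+1) := pow_pos hdx _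
    nlinarith [hp]
  calc (∫ t in (0:ℝ)..x, h t) ≤ ∫ t in (0:ℝ)..x, (2:ℝ)^(m+1) * h x := by
        apply intervalIntegral.integral_mono_on hx0.le
          (ii hcont ⟨le_rfl, hd0.le⟩ hxm) intervalIntegrable_const key
    _ = 2^(m+1) * x * h x := by
        rw [intervalIntegral.integral_const]; simp; ring

include hd0 hcont hnn P1 in
lemma L9 {x : ℝ} (hx : d/2 ≤ x) (hxd : x < d) :
    (∫ t in x..d, h t) ≤ 2^(m+1) * (d - x) * h x := by
  have hx0 : (0:ℝ) < x := lt_of_lt_of_le (by linarith) hx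
  have hxm : x ∈ Icc 0 d := ⟨hx0.le, hxd.le⟩
  have key : ∀ t ∈ Icc x d, h t ≤ 2^(m+1) * h x := by
    intro t ht
    have h1 := P1 hx0.le ht.1 ht.2
    have h2 : t ^ (m+1) ≤ (2*x) ^ (m+1) := by
      apply pow_le_pow_left₀ (hx0.le.trans ht.1)
      linarith [ht.2]
    have hht : 0 ≤ h t := hnn t ⟨hx0.le.trans ht.1, ht.2⟩
    have h3 : x ^ (m+1) * h t ≤ (2*x)^(m+1) * h x := by
      calc x ^ (m+1) * h t ≤ t ^ (m+1) * h x := h1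
        _ ≤ (2*x)^(m+1) * h x := mul_le_mul_of_nonneg_right h2 (hnn x hxm)
    rw [mul_pow] at h3
    have hp : (0:ℝ) < x ^ (m+1) := pow_pos hx0 _
    nlinarith [hp]
  calc (∫ t in x..d, h t) ≤ ∫ t in x..d, (2:ℝ)^(m+1) * h x := by
        apply intervalIntegral.integral_mono_on hxd.le
          (ii hcont hxm ⟨hd0.le, le_rfl⟩) intervalIntegrable_const key
    _ = 2^(m+1) * (d - x) * h x := by
        rw [intervalIntegral.integral_const]; simp; ring

include hd0 hd2 hcont hnn P1 P2 in
lemma L10 {x : ℝ} (hx : d/2 ≤ x) (hxd : x < d) :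
    (d - x)^(m+1) * (∫ t in (0:ℝ)..d, h t) ≤ 2^(m+3) * h x := by
  have hx0 : (0:ℝ) < x := lt_of_lt_of_le (by linarith) hx
  have hxm : x ∈ Icc 0 d := ⟨hx0.le, hxd.le⟩
  have hhx : 0 ≤ h x := hnn x hxm
  have hsplit : (∫ t in (0:ℝ)..x, h t) + (∫ t in x..d, h t) = ∫ t in (0:ℝ)..d, h t :=
    intervalIntegral.integral_add_adjacent_intervals
      (ii hcont ⟨le_rfl, hd0.le⟩ hxm) (ii hcont hxm ⟨hd0.le, le_rfl⟩)
  -- part 1: (d-x)^(m+1) * ∫₀ˣ h ≤ 2^(m+2) * h x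
  have part1 : (d - x)^(m+1) * (∫ t in (0:ℝ)..x, h t) ≤ 2^(m+2) * h x := by
    have key : ∀ t ∈ Icc (0:ℝ) x, (d-x)^(m+1) * h t ≤ 2^(m+1) * h x := by
      intro t ht
      have h1 := P2 ht.1 ht.2 hxd.le
      have h2 : (d - t) ^ (m+1) ≤ 2 ^ (m+1) := by
        apply pow_le_pow_left₀ (by linarith [ht.1, ht.2] : (0:ℝ) ≤ d - t)
        linarith [ht.1]
      exact h1.trans (mul_le_mul_of_nonneg_right h2 hhx)
    have : (∫ t in (0:ℝ)..x, (d-x)^(m+1) * h t) ≤ ∫ t in (0:ℝ)..x, (2:ℝ)^(m+1) * h x := by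
      apply intervalIntegral.integral_mono_on hx0.le
        ((ii hcont ⟨le_rfl, hd0.le⟩ hxm).const_mul _) intervalIntegrable_const key
    rw [intervalIntegral.integral_const_mul, intervalIntegral.integral_const] at this
    have hx2 : x ≤ 2 := hxd.le.trans hd2
    have hVx : 0 ≤ ∫ t in (0:ℝ)..x, h t :=
      intervalIntegral.integral_nonneg hx0.le (fun t ht => hnn t ⟨ht.1, ht.2.trans hxd.le⟩)
    simp only [smul_eq_mul, sub_zero] at this
    calc (d - x)^(m+1) * (∫ t in (0:ℝ)..x, h t) ≤ x * (2^(m+1) * h x) := this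
      _ ≤ 2 * (2^(m+1) * h x) :=
          mul_le_mul_of_nonneg_right hx2 (by positivity)
      _ = 2^(m+2) * h x := by rw [pow_succ]; ring
  have part2 : (d - x)^(m+1) * (∫ t in x..d, h t) ≤ 2^(m+1) * h x := by
    have hle := L9 hd0 hcont hnn @P1 hx hxd
    have hdx1 : d - x ≤ 1 := by linarith
    have hdx0 : (0:ℝ) ≤ d - x := by linarith
    have hpow : (d-x)^(m+1) * (d - x) ≤ 1 := by
      have : (d-x)^(m+2) ≤ 1 := pow_le_one₀ hdx0 hdx1
      calc (d-x)^(m+1) * (d-x) = (d-x)^(m+2) := by rw [← pow_succ]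
        _ ≤ 1 := this
    have hVx : 0 ≤ ∫ t in x..d, h t :=
      intervalIntegral.integral_nonneg hxd.le (fun t ht => hnn t ⟨hx0.le.trans ht.1, ht.2⟩)
    calc (d - x)^(m+1) * (∫ t in x..d, h t)
        ≤ (d-x)^(m+1) * (2^(m+1) * (d - x) * h x) :=
          mul_le_mul_of_nonneg_left hle (pow_nonneg hdx0 _)
      _ = ((d-x)^(m+1) * (d-x)) * (2^(m+1) * h x) := by ring
      _ ≤ 1 * (2^(m+1) * h x) := by
          apply mul_le_mul_of_nonneg_right hpow
          positivity
      _ = 2^(m+1) * h x := one_mul _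
  have : (d-x)^(m+1) * ((∫ t in (0:ℝ)..x, h t) + (∫ t in x..d, h t)) ≤ 2^(m+3) * h x := by
    rw [mul_add]
    have : (2:ℝ)^(m+2) * h x + 2^(m+1) * h x ≤ 2^(m+3) * h x := by
      have e : (2:ℝ)^(m+3) = 2^(m+2) + 2^(m+2) := by rw [pow_succ]; ring
      have e2 : (2:ℝ)^(m+1) ≤ 2^(m+2) := by
        apply pow_le_pow_right₀ one_le_two; omega
      nlinarith
    linarith [part1, part2]
  rwa [hsplit] at this

include hd0 hcont hnn P1 in
lemma mass {δ : ℝ} (hδ0 : 0 < δ) (hδd : δ ≤ d) :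
    (δ/d)^(m+2) * (∫ t in (0:ℝ)..d, h t) ≤ ∫ t in (0:ℝ)..δ, h t := by
  set c : ℝ := δ / d with hc
  have hc0 : 0 < c := div_pos hδ0 hd0
  have hc1 : c ≤ 1 := (div_le_one hd0).mpr hδd
  have key : ∀ y ∈ Icc (0:ℝ) d, c^(m+1) * h y ≤ h (c * y) := by
    intro y hy
    have hcy : 0 ≤ c * y := mul_nonneg hc0.le hy.1
    have hcyy : c * y ≤ y := by nlinarith [hy.1]
    have := P1 hcy hcyy hy.2
    -- (c*y)^(m+1) * h y ≤ y^(m+1) * h (c*y)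
    rcases eq_or_lt_of_le hy.1 with h0 | h0
    · rw [← h0]; simp only [mul_zero]
      have : 0 ≤ h 0 := hnn 0 ⟨le_rfl, hd0.le⟩
      nlinarith [pow_le_one₀ hc0.le hc1 (n := m+1), pow_nonneg hc0.le (m+1)]
    · rw [mul_pow] at this
      have hyp : (0:ℝ) < y ^ (m+1) := pow_pos h0 _
      nlinarith
  have hcomp : ContinuousOn (fun y => h (c * y)) (Icc 0 d) := by
    apply hcont.comp (continuous_const.mul continuous_id).continuousOn
    intro y hy
    show c * y ∈ Icc 0 d
    exact ⟨mul_nonneg hc0.le hy.1, (mul_le_of_le_one_left hy.1 hc1).trans hy.2⟩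
  have hmono : (∫ y in (0:ℝ)..d, c^(m+1) * h y) ≤ ∫ y in (0:ℝ)..d, h (c * y) := by
    apply intervalIntegral.integral_mono_on hd0.le
      ((ii hcont ⟨le_rfl, hd0.le⟩ ⟨hd0.le, le_rfl⟩).const_mul _)
      (ii hcomp ⟨le_rfl, hd0.le⟩ ⟨hd0.le, le_rfl⟩) key
  have hchg : (∫ y in (0:ℝ)..d, h (c * y)) = c⁻¹ * ∫ x in (0:ℝ)..δ, h x := by
    have h1 := intervalIntegral.integral_comp_mul_left (a := (0:ℝ)) (b := d) h (ne_of_gt hc0)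
    rw [mul_zero, show c * d = δ from by rw [hc]; field_simp, smul_eq_mul] at h1
    exact h1
  rw [intervalIntegral.integral_const_mul, hchg] at hmono
  have hr : c * (c⁻¹ * ∫ x in (0:ℝ)..δ, h x) = ∫ x in (0:ℝ)..δ, h x := by
    rw [← mul_assoc, mul_inv_cancel₀ (ne_of_gt hc0), one_mul]
  calc (δ/d)^(m+2) * (∫ t in (0:ℝ)..d, h t)
      = c * (c^(m+1) * ∫ t in (0:ℝ)..d, h t) := by rw [← hc, ← mul_assoc, ← pow_succ']
    _ ≤ c * (c⁻¹ * ∫ x in (0:ℝ)..δ, h x) := mul_le_mul_of_nonneg_left hmono hc0.le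
    _ = ∫ x in (0:ℝ)..δ, h x := hr

end

namespace Setup
variable {m : ℕ} {d : ℝ} {h φ : ℝ → ℝ}

lemma phidiff (S : Setup m d h φ) {x y : ℝ} (hx : 0 ≤ x) (hxy : x ≤ y) (hy : y ≤ d) :
    φ y - φ x = ∫ t in x..y, derivWithin φ (Icc 0 d) t := by
  have hsub : Icc x y ⊆ Icc 0 d := Icc_subset_Icc hx hy
  refine (ftc hxy (S.contphi.mono hsub) (fun t ht => S.hasDerivAt_phi
    ⟨lt_of_le_of_lt hx ht.1, lt_of_lt_of_le ht.2 hy⟩) (ii S.contdphi ⟨hx, hxy.trans hy⟩ ⟨hx.trans hxy, hy⟩)).symm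

lemma near0 (S : Setup m d h φ) : ∃ ε, 0 < ε ∧ ε < d ∧ ∀ x ∈ Icc 0 ε, φ x ≤ -(1/2) := by
  have hc : ContinuousWithinAt φ (Icc 0 d) 0 := S.contphi 0 S.mem0
  have hev : ∀ᶠ x in nhdsWithin 0 (Icc 0 d), φ x < -(1/2) := by
    have hm : Iio (-(1/2):ℝ) ∈ nhds (φ 0) := by
      rw [S.phi0]; exact Iio_mem_nhds (by norm_num)
    exact hc hm
  obtain ⟨ε, hε0, hball⟩ := Metric.mem_nhdsWithin_iff.mp hev
  have hd0 := S.hd0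
  refine ⟨min (ε/2) (d/2), by positivity, ?_, ?_⟩
  · calc min (ε/2) (d/2) ≤ d/2 := min_le_right _ _
      _ < d := by linarith
  · intro x hx
    have hx2 : x ≤ d/2 := hx.2.trans (min_le_right _ _)
    have hxd : x ∈ Icc 0 d := ⟨hx.1, by linarith⟩
    have hdist : dist x 0 < ε := by
      rw [Real.dist_eq, sub_zero, abs_of_nonneg hx.1]
      have h1 : x ≤ ε/2 := hx.2.trans (min_le_left _ _)
      linarith
    exact (hball ⟨Metric.mem_ball.mpr hdist, hxd⟩).le

set_option maxHeartbeats 1000000 in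
/-- Monotonicity: g = h·φ' ≥ 0 on [0,d]. -/
lemma gnn (S : Setup m d h φ) : ∀ x ∈ Icc 0 d, 0 ≤ h x * derivWithin φ (Icc 0 d) x := by
  classical
  obtain ⟨ε, hε0, hεd, hφε⟩ := S.near0
  set μ := mu1N d h with hμdef
  have hμpos := S.mu_pos
  set g : ℝ → ℝ := fun x => h x * derivWithin φ (Icc 0 d) x with hgdef
  have hgcont : ContinuousOn g (Icc 0 d) := S.hcont.mul S.contdphi
  have hg0 : g 0 = 0 := by rw [hgdef]; simp [S.dphi0]
  have hgd : g d = 0 := by rw [hgdef]; simp [S.dphid]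
  -- g > 0 on (0, ε]
  have hgsmall : ∀ x, 0 < x → x ≤ ε → 0 < g x := by
    intro x hx0 hxε
    have hxd : x < d := lt_of_le_of_lt hxε hεd
    have hxm : x ∈ Icc 0 d := ⟨hx0.le, hxd.le⟩
    have hI : (∫ t in (0:ℝ)..x, h t * φ t) < 0 := by
      have hmono : (∫ t in (0:ℝ)..x, h t * φ t) ≤ ∫ t in (0:ℝ)..x, h t * (-(1/2)) := by
        apply intervalIntegral.integral_mono_on hx0.le
          (ii (S.hcont.mul S.contphi) S.mem0 hxm)
          (ii (S.hcont.mul continuousOn_const) S.mem0 hxm)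
        intro t ht
        have htm : t ∈ Icc 0 d := ⟨ht.1, ht.2.trans hxd.le⟩
        exact mul_le_mul_of_nonneg_left (hφε t ⟨ht.1, ht.2.trans hxε⟩) (S.hnn t htm)
      have hHx : 0 < ∫ t in (0:ℝ)..x, h t := by
        apply intervalIntegral.intervalIntegral_pos_of_pos_on
          (ii S.hcont S.mem0 hxm) (fun t ht => S.hpos t ⟨ht.1, ht.2.trans hxd⟩) hx0
      have : (∫ t in (0:ℝ)..x, h t * (-(1/2):ℝ)) = (∫ t in (0:ℝ)..x, h t) * (-(1/2)) :=
        intervalIntegral.integral_mul_const _ _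
      rw [this] at hmono
      nlinarith
    have hgv := S.gval hxm
    show (0:ℝ) < h x * derivWithin φ (Icc 0 d) x
    rw [hgv]
    exact mul_pos_of_neg_of_neg (by linarith) hI
  -- the first zero of g at or after ε
  set A : Set ℝ := {x | x ∈ Icc ε d ∧ g x ≤ 0} with hA
  have hdA : d ∈ A := ⟨⟨hεd.le, le_rfl⟩, le_of_eq hgd⟩
  have hclosed : IsClosed A := by
    have hsub : Icc ε d ⊆ Icc 0 d := Icc_subset_Icc hε0.le le_rfl
    have := (hgcont.mono hsub).preimage_isClosed_of_isClosed isClosed_Icc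
      (isClosed_Iic (a := (0:ℝ)))
    convert this using 1
    rfl
  have hne : A.Nonempty := ⟨d, hdA⟩
  have hbdd : BddBelow A := ⟨ε, fun x hx => hx.1.1⟩
  set z := sInf A with hz
  have hzA : z ∈ A := hclosed.csInf_mem hne hbdd
  have hzε : ε ≤ z := hzA.1.1
  have hz0 : 0 < z := lt_of_lt_of_le hε0 hzε
  have hzd : z ≤ d := hzA.1.2
  have hgpos : ∀ x, 0 < x → x < z → 0 < g x := by
    intro x hx0 hxz
    rcases le_or_gt x ε with hc | hc
    · exact hgsmall x hx0 hc
    · by_contra hng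
      push_neg at hng
      have hxA : x ∈ A := ⟨⟨hc.le, hxz.le.trans hzd⟩, hng⟩
      exact absurd (csInf_le hbdd hxA) (not_le.mpr hxz)
  have hgz0 : g z = 0 := by
    refine le_antisymm hzA.2 ?_
    have hcw : ContinuousWithinAt g (Ioo 0 z) z :=
      (hgcont z ⟨hz0.le, hzd⟩).mono (fun t ht => ⟨ht.1.le, ht.2.le.trans hzd⟩)
    have hnb : (nhdsWithin z (Ioo 0 z)).NeBot := by
      rw [← mem_closure_iff_nhdsWithin_neBot, closure_Ioo (ne_of_lt hz0)]
      exact ⟨hz0.le, le_rfl⟩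
    refine ge_of_tendsto hcw ?_
    exact Filter.eventually_of_mem self_mem_nhdsWithin
      (fun t ht => (hgpos t ht.1 ht.2).le)
  -- now show z = d
  by_cases hzd' : z = d
  · intro x hx
    rcases eq_or_lt_of_le hx.1 with h0 | h0
    · rw [← h0]; simp [S.dphi0]
    · rcases eq_or_lt_of_le hx.2 with h1 | h1
      · rw [h1]; simp [S.dphid]
      · exact le_of_lt (hgpos x h0 (by rw [hzd']; exact h1))
  exfalso
  have hzlt : z < d := lt_of_le_of_ne hzd hzd'
  have hhz : 0 < h z := S.hpos z ⟨hz0, hzlt⟩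
  have hφdz : derivWithin φ (Icc 0 d) z = 0 := by
    rcases mul_eq_zero.mp hgz0 with h' | h'
    · exact absurd h' (ne_of_gt hhz)
    · exact h'
  have hzm : z ∈ Icc 0 d := ⟨hz0.le, hzd⟩
  -- φ' ≥ 0 on [0,z]
  have hφdnn : ∀ t ∈ Icc (0:ℝ) z, 0 ≤ derivWithin φ (Icc 0 d) t := by
    intro t ht
    rcases eq_or_lt_of_le ht.1 with h0 | h0
    · rw [← h0, S.dphi0]
    · rcases eq_or_lt_of_le ht.2 with h1 | h1
      · rw [h1, hφdz]
      · have hgt := hgpos t h0 h1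
        have hht : 0 < h t := S.hpos t ⟨h0, lt_trans h1 hzlt⟩
        by_contra hcon
        push_neg at hcon
        have : g t ≤ 0 := by
          rw [hgdef]
          exact mul_nonpos_of_nonneg_of_nonpos hht.le hcon.le
        linarith
  -- φ monotone on [0,z]
  have hφmono : ∀ x y, 0 ≤ x → x ≤ y → y ≤ z → φ x ≤ φ y := by
    intro x y hx hxy hy
    have := S.phidiff hx hxy (hy.trans hzd)
    have hnn2 : 0 ≤ ∫ t in x..y, derivWithin φ (Icc 0 d) t := by
      apply intervalIntegral.integral_nonneg hxy
      intro t ht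
      exact hφdnn t ⟨hx.trans ht.1, ht.2.trans hy⟩
    linarith
  -- ∫₀^z hφ = 0
  have hintz : (∫ t in (0:ℝ)..z, h t * φ t) = 0 := by
    have hgv := S.gval hzm
    have h2 : -mu1N d h * (∫ t in (0:ℝ)..z, h t * φ t) = 0 := by
      rw [← hgv]; exact hgz0
    rcases mul_eq_zero.mp h2 with h' | h'
    · exact absurd (neg_eq_zero.mp h') (ne_of_gt hμpos)
    · exact h'
  have hεm : ε ∈ Icc 0 d := ⟨hε0.le, hεd.le⟩
  have hεz : ε ∈ Icc 0 z := ⟨hε0.le, hzε⟩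
  have hHε : 0 < ∫ t in (0:ℝ)..ε, h t :=
    intervalIntegral.intervalIntegral_pos_of_pos_on (ii S.hcont S.mem0 hεm)
      (fun t ht => S.hpos t ⟨ht.1, ht.2.trans hεd⟩) hε0
  -- P := φ z > 0
  have hP : 0 < φ z := by
    by_contra hcon
    push_neg at hcon
    have hsplit : (∫ t in (0:ℝ)..ε, h t * φ t) + (∫ t in ε..z, h t * φ t)
        = ∫ t in (0:ℝ)..z, h t * φ t :=
      intervalIntegral.integral_add_adjacent_intervals
        (ii (S.hcont.mul S.contphi) S.mem0 hεm) (ii (S.hcont.mul S.contphi) hεm hzm)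
    have h1 : (∫ t in (0:ℝ)..ε, h t * φ t) ≤ -(1/2) * ∫ t in (0:ℝ)..ε, h t := by
      have : (∫ t in (0:ℝ)..ε, h t * φ t) ≤ ∫ t in (0:ℝ)..ε, h t * (-(1/2)) := by
        apply intervalIntegral.integral_mono_on hε0.le
          (ii (S.hcont.mul S.contphi) S.mem0 hεm)
          (ii (S.hcont.mul continuousOn_const) S.mem0 hεm)
        intro t ht
        exact mul_le_mul_of_nonneg_left (hφε t ht) (S.hnn t ⟨ht.1, ht.2.trans hεd.le⟩)
      rw [intervalIntegral.integral_mul_const] at this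
      linarith
    have h2 : (∫ t in ε..z, h t * φ t) ≤ 0 := by
      have hneg : 0 ≤ ∫ t in ε..z, -(h t * φ t) := by
        apply intervalIntegral.integral_nonneg hzε
        intro t ht
        have htm : t ∈ Icc 0 d := ⟨hε0.le.trans ht.1, ht.2.trans hzd⟩
        have hφt : φ t ≤ 0 := (hφmono t z (hε0.le.trans ht.1) ht.2 le_rfl).trans hcon
        have := mul_nonpos_of_nonneg_of_nonpos (S.hnn t htm) hφt
        linarith
      rw [intervalIntegral.integral_neg] at hneg
      linarith
    rw [hintz] at hsplit
    nlinarith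
  -- Qz > 0
  have hQz : 0 < ∫ t in (0:ℝ)..z, h t * (φ t)^2 := by
    have hsplit : (∫ t in (0:ℝ)..ε, h t * (φ t)^2) + (∫ t in ε..z, h t * (φ t)^2)
        = ∫ t in (0:ℝ)..z, h t * (φ t)^2 :=
      intervalIntegral.integral_add_adjacent_intervals
        (ii (S.hcont.mul (S.contphi.pow 2)) S.mem0 hεm)
        (ii (S.hcont.mul (S.contphi.pow 2)) hεm hzm)
    have h1 : (1/4) * (∫ t in (0:ℝ)..ε, h t) ≤ ∫ t in (0:ℝ)..ε, h t * (φ t)^2 := by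
      have : (∫ t in (0:ℝ)..ε, h t * (1/4)) ≤ ∫ t in (0:ℝ)..ε, h t * (φ t)^2 := by
        apply intervalIntegral.integral_mono_on hε0.le
          (ii (S.hcont.mul continuousOn_const) S.mem0 hεm)
          (ii (S.hcont.mul (S.contphi.pow 2)) S.mem0 hεm)
        intro t ht
        have hsq : (1/4:ℝ) ≤ (φ t)^2 := by nlinarith [hφε t ht]
        exact mul_le_mul_of_nonneg_left hsq (S.hnn t ⟨ht.1, ht.2.trans hεd.le⟩)
      rw [intervalIntegral.integral_mul_const] at this
      linarith
    have h2 : 0 ≤ ∫ t in ε..z, h t * (φ t)^2 :=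
      intervalIntegral.integral_nonneg hzε
        (fun t ht => mul_nonneg (S.hnn t ⟨hε0.le.trans ht.1, ht.2.trans hzd⟩) (sq_nonneg _))
    nlinarith
  -- ===== test function contradiction =====
  have hW : 0 < ∫ t in z..d, h t :=
    intervalIntegral.intervalIntegral_pos_of_pos_on (ii S.hcont hzm S.memd)
      (fun t ht => S.hpos t ⟨lt_trans hz0 ht.1, ht.2⟩) hzlt
  have hHz : 0 < ∫ t in (0:ℝ)..z, h t :=
    intervalIntegral.intervalIntegral_pos_of_pos_on (ii S.hcont S.mem0 hzm)
      (fun t ht => S.hpos t ⟨ht.1, lt_trans ht.2 hzlt⟩) hz0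
  have hVsplit : (∫ t in (0:ℝ)..z, h t) + (∫ t in z..d, h t) = ∫ t in (0:ℝ)..d, h t :=
    intervalIntegral.integral_add_adjacent_intervals (ii S.hcont S.mem0 hzm)
      (ii S.hcont hzm S.memd)
  have hV : 0 < ∫ t in (0:ℝ)..d, h t := by linarith
  set Vv := ∫ t in (0:ℝ)..d, h t with hVdef
  set W := ∫ t in z..d, h t with hWdef
  set Qz := ∫ t in (0:ℝ)..z, h t * (φ t)^2 with hQzdef
  set P := φ z with hPdef
  set k : ℝ := P * W / Vv with hkdef
  set c : ℝ → ℝ := fun x => max 0 (min x z) with hcdef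
  have hcc : Continuous c := continuous_const.max (continuous_id.min continuous_const)
  have hcrange : ∀ x, c x ∈ Icc 0 z :=
    fun x => ⟨le_max_left _ _, max_le hz0.le (min_le_right _ _)⟩
  have hIccz : Icc (0:ℝ) z ⊆ Icc 0 d := Icc_subset_Icc le_rfl hzd
  have hcval1 : ∀ x ∈ Icc (0:ℝ) z, c x = x := by
    intro x hx
    show max 0 (min x z) = x
    rw [min_eq_left hx.2, max_eq_right hx.1]
  have hcval2 : ∀ x, z ≤ x → c x = z := by
    intro x hx
    show max 0 (min x z) = z
    rw [min_eq_right hx, max_eq_right hz0.le]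
  have hcval3 : ∀ x, x ≤ 0 → c x = 0 := by
    intro x hx
    show max 0 (min x z) = 0
    rw [max_eq_left ((min_le_left x z).trans hx)]
  set u : ℝ → ℝ := fun x => φ (c x) with hudef
  have hφdiffW : ∀ x ∈ Icc (0:ℝ) d, HasDerivWithinAt φ (derivWithin φ (Icc 0 d) x) (Icc 0 d) x :=
    fun x hx => ((S.phiC1.differentiableOn one_ne_zero) x hx).hasDerivWithinAt
  have hw : ∀ x, HasDerivAt u (derivWithin φ (Icc 0 d) (c x)) x := by
    intro x
    rcases lt_trichotomy x 0 with hx | hx | hx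
    · have hevq : u =ᶠ[nhds x] (fun _ => φ 0) := by
        filter_upwards [Iio_mem_nhds hx] with y hy
        show φ (c y) = φ 0
        rw [hcval3 y hy.le]
      rw [hcval3 x hx.le, S.dphi0]
      exact (hasDerivAt_const x (φ 0)).congr_of_eventuallyEq hevq
    · subst hx
      rw [hcval1 0 ⟨le_rfl, hz0.le⟩, S.dphi0]
      have hleft : HasDerivWithinAt u 0 (Iic 0) 0 := by
        refine (hasDerivWithinAt_const 0 (Iic 0) (φ 0)).congr ?_ ?_
        · intro y hy
          show φ (c y) = φ 0
          rw [hcval3 y hy]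
        · show φ (c 0) = φ 0
          rw [hcval3 0 le_rfl]
      have h0' : HasDerivWithinAt φ 0 (Icc 0 d) 0 := by
        have := hφdiffW 0 S.mem0
        rwa [S.dphi0] at this
      have hmid : HasDerivWithinAt u 0 (Icc 0 z) 0 := by
        refine (h0'.mono hIccz).congr ?_ ?_
        · intro y hy
          show φ (c y) = φ y
          rw [hcval1 y hy]
        · show φ (c 0) = φ 0
          rw [hcval1 0 ⟨le_rfl, hz0.le⟩]
      have hset : Icc (0:ℝ) z =ᶠ[nhds 0] Ici 0 := by
        rw [Filter.eventuallyEq_set]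
        filter_upwards [Iio_mem_nhds hz0] with y hy
        simp only [Set.mem_Iio] at hy
        simp only [Set.mem_Icc, Set.mem_Ici]
        exact ⟨fun hc => hc.1, fun hc => ⟨hc, hy.le⟩⟩
      have hright : HasDerivWithinAt u 0 (Ici 0) 0 := (hasDerivWithinAt_congr_set hset).mp hmid
      have hun := hleft.union hright
      rw [Iic_union_Ici] at hun
      exact hasDerivWithinAt_univ.mp hun
    · rcases lt_trichotomy x z with hxz | hxz | hxz
      · have hevq : u =ᶠ[nhds x] φ := by
          filter_upwards [Ioo_mem_nhds hx hxz] with y hy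
          show φ (c y) = φ y
          rw [hcval1 y ⟨hy.1.le, hy.2.le⟩]
        rw [hcval1 x ⟨hx.le, hxz.le⟩]
        exact (S.hasDerivAt_phi ⟨hx, lt_trans hxz hzlt⟩).congr_of_eventuallyEq hevq
      · rw [hxz, hcval2 z le_rfl, hφdz]
        have hφz' : HasDerivWithinAt φ 0 (Icc 0 d) z := by
          have := hφdiffW z hzm
          rwa [hφdz] at this
        have hmid : HasDerivWithinAt u 0 (Icc 0 z) z := by
          refine (hφz'.mono hIccz).congr ?_ ?_
          · intro y hy
            show φ (c y) = φ y
            rw [hcval1 y hy]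
          · show φ (c z) = φ z
            rw [hcval2 z le_rfl]
        have hset : Icc (0:ℝ) z =ᶠ[nhds z] Iic z := by
          rw [Filter.eventuallyEq_set]
          filter_upwards [Ioi_mem_nhds hz0] with y hy
          simp only [Set.mem_Ioi] at hy
          simp only [Set.mem_Icc, Set.mem_Iic]
          exact ⟨fun hc => hc.2, fun hc => ⟨hy.le, hc⟩⟩
        have hleft : HasDerivWithinAt u 0 (Iic z) z := (hasDerivWithinAt_congr_set hset).mp hmid
        have hright : HasDerivWithinAt u 0 (Ici z) z := by
          refine (hasDerivWithinAt_const z (Ici z) (φ z)).congr ?_ ?_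
          · intro y hy
            show φ (c y) = φ z
            rw [hcval2 y hy]
          · show φ (c z) = φ z
            rw [hcval2 z le_rfl]
        have hun := hleft.union hright
        rw [Iic_union_Ici] at hun
        exact hasDerivWithinAt_univ.mp hun
      · have hevq : u =ᶠ[nhds x] (fun _ => φ z) := by
          filter_upwards [Ioi_mem_nhds hxz] with y hy
          show φ (c y) = φ z
          rw [hcval2 y (le_of_lt hy)]
        rw [hcval2 x hxz.le, hφdz]
        exact (hasDerivAt_const x (φ z)).congr_of_eventuallyEq hevq
  have hudiff : Differentiable ℝ u := fun x => (hw x).differentiableAt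
  have hucont : Continuous u := hudiff.continuous
  have hwcont : Continuous (fun x => derivWithin φ (Icc 0 d) (c x)) :=
    S.contdphi.comp_continuous hcc (fun x => hIccz (hcrange x))
  have huderiv : ∀ x, deriv u x = derivWithin φ (Icc 0 d) (c x) := fun x => (hw x).deriv
  have hucd : ContDiff ℝ 1 u := by
    refine contDiff_one_iff_deriv.mpr ⟨hudiff, ?_⟩
    have heq : deriv u = fun x => derivWithin φ (Icc 0 d) (c x) := funext huderiv
    rw [heq]
    exact hwcont
  set f : ℝ → ℝ := fun x => u x - k with hfdef
  have hfcd : ContDiff ℝ 1 f := hucd.sub contDiff_const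
  have hfderiv : ∀ x, deriv f x = derivWithin φ (Icc 0 d) (c x) := by
    intro x
    have : deriv f x = deriv u x := by
      show deriv (fun y => u y - k) x = deriv u x
      rw [deriv_sub_const]
    rw [this]
    exact huderiv x
  have hu_eq1 : ∀ t ∈ Icc (0:ℝ) z, u t = φ t := by
    intro t ht
    show φ (c t) = φ t
    rw [hcval1 t ht]
  have hu_eq2 : ∀ t ∈ Icc z d, u t = P := by
    intro t ht
    show φ (c t) = φ z
    rw [hcval2 t ht.1]
  have hiu : ContinuousOn (fun t => h t * u t) (Icc 0 d) := S.hcont.mul hucont.continuousOn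
  have hI1 : (∫ t in (0:ℝ)..d, h t * u t) = W * P := by
    have hI1a : (∫ t in (0:ℝ)..z, h t * u t) = ∫ t in (0:ℝ)..z, h t * φ t := by
      apply intervalIntegral.integral_congr
      intro t ht
      rw [uIcc_of_le hz0.le] at ht
      show h t * u t = h t * φ t
      rw [hu_eq1 t ht]
    have hI1b : (∫ t in z..d, h t * u t) = W * P := by
      have he : (∫ t in z..d, h t * u t) = ∫ t in z..d, h t * P := by
        apply intervalIntegral.integral_congr
        intro t ht
        rw [uIcc_of_le hzd] at ht
        show h t * u t = h t * P
        rw [hu_eq2 t ht]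
      rw [he, intervalIntegral.integral_mul_const]
    rw [← intervalIntegral.integral_add_adjacent_intervals (ii hiu S.mem0 hzm) (ii hiu hzm S.memd),
      hI1a, hintz, hI1b, zero_add]
  have hiu2 : ContinuousOn (fun t => h t * (u t)^2) (Icc 0 d) :=
    S.hcont.mul (hucont.pow 2).continuousOn
  have hI2 : (∫ t in (0:ℝ)..d, h t * (u t)^2) = Qz + W * P^2 := by
    have ha : (∫ t in (0:ℝ)..z, h t * (u t)^2) = Qz := by
      rw [hQzdef]
      apply intervalIntegral.integral_congr
      intro t ht
      rw [uIcc_of_le hz0.le] at ht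
      show h t * (u t)^2 = h t * (φ t)^2
      rw [hu_eq1 t ht]
    have hb : (∫ t in z..d, h t * (u t)^2) = W * P^2 := by
      have he : (∫ t in z..d, h t * (u t)^2) = ∫ t in z..d, h t * P^2 := by
        apply intervalIntegral.integral_congr
        intro t ht
        rw [uIcc_of_le hzd] at ht
        show h t * (u t)^2 = h t * P^2
        rw [hu_eq2 t ht]
      rw [he, intervalIntegral.integral_mul_const]
    rw [← intervalIntegral.integral_add_adjacent_intervals (ii hiu2 S.mem0 hzm) (ii hiu2 hzm S.memd),
      ha, hb]
  have hEz : (∫ t in (0:ℝ)..z, h t * (derivWithin φ (Icc 0 d) t)^2) = mu1N d h * Qz :=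
    S.Epartial hzm hgz0
  have hwc2 : ContinuousOn (fun t => h t * (derivWithin φ (Icc 0 d) (c t))^2) (Icc 0 d) :=
    S.hcont.mul ((hwcont.pow 2).continuousOn)
  have hI3 : (∫ t in (0:ℝ)..d, h t * (deriv f t)^2) = mu1N d h * Qz := by
    have hcongr : (fun t => h t * (deriv f t)^2)
        = fun t => h t * (derivWithin φ (Icc 0 d) (c t))^2 := by
      funext t
      rw [hfderiv t]
    rw [hcongr]
    have ha : (∫ t in (0:ℝ)..z, h t * (derivWithin φ (Icc 0 d) (c t))^2)
        = ∫ t in (0:ℝ)..z, h t * (derivWithin φ (Icc 0 d) t)^2 := by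
      apply intervalIntegral.integral_congr
      intro t ht
      rw [uIcc_of_le hz0.le] at ht
      show h t * (derivWithin φ (Icc 0 d) (c t))^2 = h t * (derivWithin φ (Icc 0 d) t)^2
      rw [hcval1 t ht]
    have hb : (∫ t in z..d, h t * (derivWithin φ (Icc 0 d) (c t))^2) = 0 := by
      have he : (∫ t in z..d, h t * (derivWithin φ (Icc 0 d) (c t))^2)
          = ∫ t in z..d, (0:ℝ) := by
        apply intervalIntegral.integral_congr
        intro t ht
        rw [uIcc_of_le hzd] at ht
        show h t * (derivWithin φ (Icc 0 d) (c t))^2 = 0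
        rw [hcval2 t ht.1, hφdz]
        ring
      rw [he]
      simp
    rw [← intervalIntegral.integral_add_adjacent_intervals (ii hwc2 S.mem0 hzm)
      (ii hwc2 hzm S.memd), ha, hb, add_zero]
    exact hEz
  have hIf : (∫ t in (0:ℝ)..d, h t * f t) = 0 := by
    have he : (fun t => h t * f t) = fun t => h t * u t - k * h t := by
      funext t
      show h t * (u t - k) = h t * u t - k * h t
      ring
    rw [he, intervalIntegral.integral_sub (ii hiu S.mem0 S.memd)
      ((ii S.hcont S.mem0 S.memd).const_mul k), intervalIntegral.integral_const_mul, hI1]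
    rw [hkdef]
    field_simp
    ring
  have hDf : (∫ t in (0:ℝ)..d, h t * (f t)^2) = Qz + P^2*W*(Vv - W)/Vv := by
    have he : (fun t => h t * (f t)^2)
        = fun t => (h t * (u t)^2 - (2*k) * (h t * u t)) + k^2 * h t := by
      funext t
      show h t * (u t - k)^2 = (h t * (u t)^2 - (2*k) * (h t * u t)) + k^2 * h t
      ring
    rw [he, intervalIntegral.integral_add (IntervalIntegrable.sub (ii hiu2 S.mem0 S.memd)
      ((ii hiu S.mem0 S.memd).const_mul (2*k))) ((ii S.hcont S.mem0 S.memd).const_mul (k^2)),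
      intervalIntegral.integral_sub (ii hiu2 S.mem0 S.memd) ((ii hiu S.mem0 S.memd).const_mul (2*k)),
      intervalIntegral.integral_const_mul, intervalIntegral.integral_const_mul, hI1, hI2]
    rw [hkdef]
    have hVne : Vv ≠ 0 := ne_of_gt hV
    field_simp
    ring
  have hDfpos : 0 < ∫ t in (0:ℝ)..d, h t * (f t)^2 := by
    rw [hDf]
    have hVW : 0 < Vv - W := by
      have : Vv - W = ∫ t in (0:ℝ)..z, h t := by rw [hVdef, hWdef]; linarith [hVsplit]
      rw [this]
      exact hHz
    have hterm : 0 < P^2*W*(Vv - W)/Vv :=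
      div_pos (mul_pos (mul_pos (pow_pos hP 2) hW) hVW) hV
    linarith [hQz]
  have hbddS : BddBelow { r : ℝ | ∃ f : ℝ → ℝ, ContDiff ℝ 1 f ∧
      (∫ x in (0:ℝ)..d, h x * f x) = 0 ∧ (∫ x in (0:ℝ)..d, h x * (f x) ^ 2) ≠ 0 ∧
      r = (∫ x in (0:ℝ)..d, h x * (deriv f x) ^ 2) / (∫ x in (0:ℝ)..d, h x * (f x) ^ 2) } := by
    refine ⟨0, fun s hs => ?_⟩
    obtain ⟨f0, _, _, hQ0, hs0⟩ := hs
    rw [hs0]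
    apply div_nonneg
    · exact intervalIntegral.integral_nonneg S.hd0.le
        (fun t ht => mul_nonneg (S.hnn t ht) (sq_nonneg _))
    · exact intervalIntegral.integral_nonneg S.hd0.le
        (fun t ht => mul_nonneg (S.hnn t ht) (sq_nonneg _))
  have hrS : ((∫ x in (0:ℝ)..d, h x * (deriv f x) ^ 2) / (∫ x in (0:ℝ)..d, h x * (f x) ^ 2))
      ∈ { r : ℝ | ∃ f : ℝ → ℝ, ContDiff ℝ 1 f ∧
      (∫ x in (0:ℝ)..d, h x * f x) = 0 ∧ (∫ x in (0:ℝ)..d, h x * (f x) ^ 2) ≠ 0 ∧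
      r = (∫ x in (0:ℝ)..d, h x * (deriv f x) ^ 2) / (∫ x in (0:ℝ)..d, h x * (f x) ^ 2) } :=
    ⟨f, hfcd, hIf, ne_of_gt hDfpos, rfl⟩
  have hle : mu1N d h ≤ (∫ x in (0:ℝ)..d, h x * (deriv f x) ^ 2)
      / (∫ x in (0:ℝ)..d, h x * (f x) ^ 2) := csInf_le hbddS hrS
  have hrlt : (∫ x in (0:ℝ)..d, h x * (deriv f x) ^ 2)
      / (∫ x in (0:ℝ)..d, h x * (f x) ^ 2) < mu1N d h := by
    rw [hI3, div_lt_iff₀ hDfpos, hDf]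
    have hVW : 0 < Vv - W := by
      have : Vv - W = ∫ t in (0:ℝ)..z, h t := by rw [hVdef, hWdef]; linarith [hVsplit]
      rw [this]
      exact hHz
    have hterm : 0 < P^2*W*(Vv - W)/Vv :=
      div_pos (mul_pos (mul_pos (pow_pos hP 2) hW) hVW) hV
    exact mul_lt_mul_of_pos_left (lt_add_of_pos_right Qz hterm) hμpos
  exact absurd hle (not_le.mpr hrlt)

end Setup

namespace Setup
variable {m : ℕ} {d : ℝ} {h φ : ℝ → ℝ}

lemma phid_nonneg (S : Setup m d h φ) : ∀ x ∈ Icc 0 d, 0 ≤ derivWithin φ (Icc 0 d) x := by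
  intro x hx
  rcases eq_or_lt_of_le hx.1 with h0 | h0
  · rw [← h0, S.dphi0]
  rcases eq_or_lt_of_le hx.2 with h1 | h1
  · rw [h1, S.dphid]
  · have hg := S.gnn x hx
    have hh := S.hpos x ⟨h0, h1⟩
    by_contra hc
    push_neg at hc
    nlinarith

lemma phi_mono (S : Setup m d h φ) {x y : ℝ} (hx : 0 ≤ x) (hxy : x ≤ y) (hy : y ≤ d) :
    φ x ≤ φ y := by
  have hdiff := S.phidiff hx hxy hy
  have h2 : 0 ≤ ∫ t in x..y, derivWithin φ (Icc 0 d) t :=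
    intervalIntegral.integral_nonneg hxy
      (fun t ht => S.phid_nonneg t ⟨hx.trans ht.1, ht.2.trans hy⟩)
  linarith

lemma phi_lb (S : Setup m d h φ) : ∀ x ∈ Icc 0 d, -1 ≤ φ x := by
  intro x hx
  have := S.phi_mono (le_refl (0:ℝ)) hx.1 hx.2
  rw [S.phi0] at this
  exact this

lemma phi_ub (S : Setup m d h φ) : ∀ x ∈ Icc 0 d, φ x ≤ φ d :=
  fun x hx => S.phi_mono hx.1 hx.2 le_rfl

lemma bound1 (S : Setup m d h φ) {x : ℝ} (hx : x ∈ Ioo 0 d) (hx2 : x ≤ d/2) :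
    derivWithin φ (Icc 0 d) x ≤ mu1N d h * 2^(m+1) * x := by
  have hxm : x ∈ Icc 0 d := Ioo_subset_Icc_self hx
  have hhx := S.hpos x hx
  have hgv := S.gval hxm
  have hIle : -(∫ t in (0:ℝ)..x, h t * φ t) ≤ ∫ t in (0:ℝ)..x, h t := by
    have hmono : (∫ t in (0:ℝ)..x, h t * (-1)) ≤ ∫ t in (0:ℝ)..x, h t * φ t := by
      apply intervalIntegral.integral_mono_on hx.1.le
        (ii (S.hcont.mul continuousOn_const) S.mem0 hxm)
        (ii (S.hcont.mul S.contphi) S.mem0 hxm)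
      intro t ht
      have htm : t ∈ Icc 0 d := ⟨ht.1, ht.2.trans hxm.2⟩
      exact mul_le_mul_of_nonneg_left (S.phi_lb t htm) (S.hnn t htm)
    rw [intervalIntegral.integral_mul_const] at hmono
    linarith
  have hH := L8 S.hd0 S.hcont S.hnn (fun {a b} ha hab hb => P2 S.hnn S.hconc ha hab hb) hx.1 hx2
  have hstep : h x * derivWithin φ (Icc 0 d) x ≤ mu1N d h * (2^(m+1) * x * h x) := by
    rw [hgv]
    have he : -mu1N d h * (∫ t in (0:ℝ)..x, h t * φ t)
        = mu1N d h * (-(∫ t in (0:ℝ)..x, h t * φ t)) := by ring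
    rw [he]
    exact mul_le_mul_of_nonneg_left (hIle.trans hH) S.mu_pos.le
  nlinarith [hstep, hhx]

lemma bound2a (S : Setup m d h φ) {x : ℝ} (hx : x ∈ Ioo 0 d) (hx2 : d/2 ≤ x)
    {B : ℝ} (hB : ∀ t ∈ Icc 0 d, φ t ≤ B) (hB0 : 0 ≤ B) :
    derivWithin φ (Icc 0 d) x ≤ mu1N d h * (2^(m+1) * (d - x) * B) := by
  have hxm : x ∈ Icc 0 d := Ioo_subset_Icc_self hx
  have hhx := S.hpos x hx
  have hgv := S.gval2 hxm
  have hIle : (∫ t in x..d, h t * φ t) ≤ B * ∫ t in x..d, h t := by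
    have hmono : (∫ t in x..d, h t * φ t) ≤ ∫ t in x..d, h t * B := by
      apply intervalIntegral.integral_mono_on hx.2.le
        (ii (S.hcont.mul S.contphi) hxm S.memd)
        (ii (S.hcont.mul continuousOn_const) hxm S.memd)
      intro t ht
      have htm : t ∈ Icc 0 d := ⟨hxm.1.trans ht.1, ht.2⟩
      exact mul_le_mul_of_nonneg_left (hB t htm) (S.hnn t htm)
    rw [intervalIntegral.integral_mul_const] at hmono
    linarith
  have hH := L9 S.hd0 S.hcont S.hnn (fun {a b} ha hab hb => P1 S.hnn S.hconc ha hab hb) hx2 hx.2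
  have hstep : h x * derivWithin φ (Icc 0 d) x
      ≤ mu1N d h * (2^(m+1) * (d - x) * B * h x) := by
    rw [hgv]
    apply mul_le_mul_of_nonneg_left _ S.mu_pos.le
    calc (∫ t in x..d, h t * φ t) ≤ B * ∫ t in x..d, h t := hIle
      _ ≤ B * (2^(m+1) * (d - x) * h x) := mul_le_mul_of_nonneg_left hH hB0
      _ = 2^(m+1) * (d - x) * B * h x := by ring
  nlinarith [hstep, hhx]

lemma bound2b (S : Setup m d h φ) {x : ℝ} (hx : x ∈ Ioo 0 d) (hx2 : d/2 ≤ x) :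
    (d - x)^(m+1) * derivWithin φ (Icc 0 d) x ≤ mu1N d h * 2^(m+3) := by
  have hxm : x ∈ Icc 0 d := Ioo_subset_Icc_self hx
  have hhx := S.hpos x hx
  have hgv := S.gval hxm
  have hIle : -(∫ t in (0:ℝ)..x, h t * φ t) ≤ ∫ t in (0:ℝ)..d, h t := by
    have h1 : -(∫ t in (0:ℝ)..x, h t * φ t) ≤ ∫ t in (0:ℝ)..x, h t := by
      have hmono : (∫ t in (0:ℝ)..x, h t * (-1)) ≤ ∫ t in (0:ℝ)..x, h t * φ t := by
        apply intervalIntegral.integral_mono_on hx.1.le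
          (ii (S.hcont.mul continuousOn_const) S.mem0 hxm)
          (ii (S.hcont.mul S.contphi) S.mem0 hxm)
        intro t ht
        have htm : t ∈ Icc 0 d := ⟨ht.1, ht.2.trans hxm.2⟩
        exact mul_le_mul_of_nonneg_left (S.phi_lb t htm) (S.hnn t htm)
      rw [intervalIntegral.integral_mul_const] at hmono
      linarith
    have h2 : (∫ t in (0:ℝ)..x, h t) ≤ ∫ t in (0:ℝ)..d, h t := by
      have hsplit : (∫ t in (0:ℝ)..x, h t) + (∫ t in x..d, h t) = ∫ t in (0:ℝ)..d, h t :=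
        intervalIntegral.integral_add_adjacent_intervals (ii S.hcont S.mem0 hxm)
          (ii S.hcont hxm S.memd)
      have h3 : 0 ≤ ∫ t in x..d, h t :=
        intervalIntegral.integral_nonneg hx.2.le
          (fun t ht => S.hnn t ⟨hxm.1.trans ht.1, ht.2⟩)
      linarith
    linarith
  have hL10 := L10 S.hd0 S.hd2 S.hcont S.hnn
    (fun {a b} ha hab hb => P1 S.hnn S.hconc ha hab hb)
    (fun {a b} ha hab hb => P2 S.hnn S.hconc ha hab hb) hx2 hx.2
  have hdx0 : (0:ℝ) ≤ d - x := by linarith [hx.2]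
  have hstep : (d-x)^(m+1) * (h x * derivWithin φ (Icc 0 d) x)
      ≤ mu1N d h * (2^(m+3) * h x) := by
    rw [hgv]
    calc (d-x)^(m+1) * (-mu1N d h * (∫ t in (0:ℝ)..x, h t * φ t))
        = mu1N d h * ((d-x)^(m+1) * (-(∫ t in (0:ℝ)..x, h t * φ t))) := by ring
      _ ≤ mu1N d h * ((d-x)^(m+1) * (∫ t in (0:ℝ)..d, h t)) := by
          apply mul_le_mul_of_nonneg_left _ S.mu_pos.le
          exact mul_le_mul_of_nonneg_left hIle (pow_nonneg hdx0 _)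
      _ ≤ mu1N d h * (2^(m+3) * h x) :=
          mul_le_mul_of_nonneg_left hL10 S.mu_pos.le
  nlinarith [hstep, hhx]

end Setup

namespace Setup
variable {m : ℕ} {d : ℝ} {h φ : ℝ → ℝ}

set_option maxHeartbeats 1000000 in
lemma B_bound (S : Setup m d h φ) : φ d ≤ ((100:ℝ) * 2^(m+2))^(m+2) := by
  set B := φ d with hBdef
  by_contra hcon
  push_neg at hcon
  set D : ℝ := 25 * 2^(m+2) with hDdef
  have h2p : (1:ℝ) ≤ 2^(m+2) := one_le_pow₀ one_le_two
  have h2m1 : (1:ℝ) ≤ 2^m := one_le_pow₀ one_le_two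
  have hD0 : (0:ℝ) < D := by positivity
  have hCB1 : (1:ℝ) ≤ ((100:ℝ) * 2^(m+2))^(m+2) := one_le_pow₀ (by nlinarith)
  have hB1 : (1:ℝ) ≤ B := le_trans hCB1 hcon.le
  have hB0 : (0:ℝ) < B := by linarith
  have hBub : ∀ t ∈ Icc 0 d, φ t ≤ B := S.phi_ub
  set r : ℝ := ((m:ℝ)+1)/((m:ℝ)+2) with hrdef
  have hBr0 : (0:ℝ) < B ^ r := Real.rpow_pos_of_pos hB0 r
  set Y : ℝ := 2 * D * B ^ r with hYdef
  have hY0 : 0 < Y := by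
    rw [hYdef]
    exact mul_pos (by positivity) hBr0
  have hYpow : Y^(m+2) = 2^(m+2) * D^(m+2) * B^(m+1) := by
    rw [hYdef, mul_pow, mul_pow]
    congr 1
    rw [← Real.rpow_natCast (B ^ r) (m+2), ← Real.rpow_mul hB0.le]
    rw [show r * ((m+2:ℕ):ℝ) = ((m+1:ℕ):ℝ) by rw [hrdef]; push_cast; field_simp]
    exact Real.rpow_natCast B (m+1)
  have hkey : ∀ x ∈ Ioo 0 d, d/2 ≤ x → derivWithin φ (Icc 0 d) x ≤ Y := by
    intro x hx hx2
    have hφd0 := S.phid_nonneg x (Ioo_subset_Icc_self hx)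
    have ha := S.bound2a hx hx2 hBub (by linarith)
    have hb := S.bound2b hx hx2
    have hdx0 : (0:ℝ) ≤ d - x := by linarith [hx.2]
    have hμ25 := S.hmuu
    have hμ0 := S.mu_pos
    have ha' : derivWithin φ (Icc 0 d) x ≤ D * B * (d - x) := by
      calc derivWithin φ (Icc 0 d) x ≤ mu1N d h * (2^(m+1) * (d-x) * B) := ha
        _ ≤ 25 * (2^(m+1) * (d-x) * B) := mul_le_mul_of_nonneg_right hμ25 (by positivity)
        _ ≤ D * B * (d - x) := by
            rw [hDdef]
            have h2 : (2:ℝ)^(m+1) ≤ 2^(m+2) := pow_le_pow_right₀ one_le_two (by omega)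
            nlinarith [mul_nonneg hdx0 hB0.le]
    have hb' : (d-x)^(m+1) * derivWithin φ (Icc 0 d) x ≤ 2 * D := by
      calc (d-x)^(m+1) * derivWithin φ (Icc 0 d) x ≤ mu1N d h * 2^(m+3) := hb
        _ ≤ 25 * 2^(m+3) := mul_le_mul_of_nonneg_right hμ25 (by positivity)
        _ = 2 * D := by rw [hDdef, pow_succ]; ring
    have hpow : (derivWithin φ (Icc 0 d) x)^(m+2) ≤ 2^(m+2) * D^(m+2) * B^(m+1) := by
      have h2 : (derivWithin φ (Icc 0 d) x)^(m+1) ≤ (D * B * (d-x))^(m+1) :=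
        pow_le_pow_left₀ hφd0 ha' (m+1)
      have h3 : (derivWithin φ (Icc 0 d) x)^(m+1) * derivWithin φ (Icc 0 d) x
          ≤ (D * B * (d-x))^(m+1) * derivWithin φ (Icc 0 d) x :=
        mul_le_mul_of_nonneg_right h2 hφd0
      have h4 : (D * B * (d-x))^(m+1) * derivWithin φ (Icc 0 d) x
          = (D*B)^(m+1) * ((d-x)^(m+1) * derivWithin φ (Icc 0 d) x) := by
        rw [mul_pow, mul_pow]; ring
      have h5 : (D*B)^(m+1) * ((d-x)^(m+1) * derivWithin φ (Icc 0 d) x)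
          ≤ (D*B)^(m+1) * (2*D) :=
        mul_le_mul_of_nonneg_left hb' (by positivity)
      have h6 : (D*B)^(m+1) * (2*D) ≤ 2^(m+2) * D^(m+2) * B^(m+1) := by
        have e1 : (D*B)^(m+1) * (2*D) = 2 * (D^(m+2) * B^(m+1)) := by
          rw [mul_pow, pow_succ]; ring
        have e2 : (2:ℝ) ≤ 2^(m+2) := by
          calc (2:ℝ) = 2^1 := (pow_one 2).symm
            _ ≤ 2^(m+2) := pow_le_pow_right₀ one_le_two (by omega)
        have e3 : (0:ℝ) ≤ D^(m+2) * B^(m+1) := by positivity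
        calc (D*B)^(m+1) * (2*D) = 2 * (D^(m+2) * B^(m+1)) := e1
          _ ≤ 2^(m+2) * (D^(m+2) * B^(m+1)) := mul_le_mul_of_nonneg_right e2 e3
          _ = 2^(m+2) * D^(m+2) * B^(m+1) := by ring
      calc (derivWithin φ (Icc 0 d) x)^(m+2)
          = (derivWithin φ (Icc 0 d) x)^(m+1) * derivWithin φ (Icc 0 d) x := by rw [pow_succ]
        _ ≤ (D * B * (d-x))^(m+1) * derivWithin φ (Icc 0 d) x := h3
        _ = (D*B)^(m+1) * ((d-x)^(m+1) * derivWithin φ (Icc 0 d) x) := h4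
        _ ≤ (D*B)^(m+1) * (2*D) := h5
        _ ≤ 2^(m+2) * D^(m+2) * B^(m+1) := h6
    exact le_of_pow_le_pow_left₀ (n := m+2) (by omega) hY0.le (by rw [hYpow]; exact hpow)
  have hY_lt : Y < B/2 := by
    have h4D : (0:ℝ) < 4*D := by positivity
    have hB14 : 4*D < B ^ ((1:ℝ)/((m:ℝ)+2)) := by
      have hlt : ((4*D)^(m+2) : ℝ) < B := by
        have he : ((4*D)^(m+2) : ℝ) = ((100:ℝ) * 2^(m+2))^(m+2) := by
          rw [hDdef]; ring_nf
        rw [he]; exact hcon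
      have hrr := Real.rpow_lt_rpow (by positivity : (0:ℝ) ≤ (4*D)^(m+2)) hlt
        (by positivity : (0:ℝ) < 1/((m:ℝ)+2))
      rwa [← Real.rpow_natCast (4*D) (m+2), ← Real.rpow_mul h4D.le,
        show ((m+2:ℕ):ℝ) * (1/((m:ℝ)+2)) = 1 by push_cast; field_simp,
        Real.rpow_one] at hrr
    have hBr : B ^ r = B / B ^ ((1:ℝ)/((m:ℝ)+2)) := by
      rw [eq_div_iff (ne_of_gt (Real.rpow_pos_of_pos hB0 _)), ← Real.rpow_add hB0]
      rw [show r + 1/((m:ℝ)+2) = 1 by rw [hrdef]; field_simp; ring, Real.rpow_one]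
    rw [hYdef, hBr]
    have hq : B / B ^ ((1:ℝ)/((m:ℝ)+2)) < B / (4*D) :=
      div_lt_div_of_pos_left hB0 h4D hB14
    calc 2*D*(B / B ^ ((1:ℝ)/((m:ℝ)+2))) < 2*D*(B/(4*D)) :=
          mul_lt_mul_of_pos_left hq (by positivity)
      _ = B/2 := by field_simp; ring
  have hd0 := S.hd0
  have hd2 := S.hd2
  have hd2m : d/2 ∈ Icc 0 d := ⟨by linarith, by linarith⟩
  have hrise : φ d - φ 0 = ∫ t in (0:ℝ)..d, derivWithin φ (Icc 0 d) t :=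
    S.phidiff le_rfl hd0.le le_rfl
  have hsplit : (∫ t in (0:ℝ)..(d/2), derivWithin φ (Icc 0 d) t)
      + (∫ t in (d/2)..d, derivWithin φ (Icc 0 d) t)
      = ∫ t in (0:ℝ)..d, derivWithin φ (Icc 0 d) t :=
    intervalIntegral.integral_add_adjacent_intervals (ii S.contdphi S.mem0 hd2m)
      (ii S.contdphi hd2m S.memd)
  have hleft : (∫ t in (0:ℝ)..(d/2), derivWithin φ (Icc 0 d) t) ≤ 25 * 2^m := by
    have hmono : (∫ t in (0:ℝ)..(d/2), derivWithin φ (Icc 0 d) t)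
        ≤ ∫ t in (0:ℝ)..(d/2), mu1N d h * 2^(m+1) * t := by
      apply intervalIntegral.integral_mono_on (by linarith)
        (ii S.contdphi S.mem0 hd2m)
        ((continuous_const.mul continuous_id).intervalIntegrable _ _)
      intro t ht
      rcases eq_or_lt_of_le ht.1 with h0 | h0
      · rw [← h0, S.dphi0]
        simp
      · exact S.bound1 ⟨h0, lt_of_le_of_lt ht.2 (by linarith)⟩ ht.2
    have hid : (∫ t in (0:ℝ)..(d/2), mu1N d h * 2^(m+1) * t)
        = mu1N d h * 2^(m+1) * (((d/2)^2 - 0^2)/2) := by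
      rw [show (fun t => mu1N d h * 2^(m+1) * t) = fun t => (mu1N d h * 2^(m+1)) * t from rfl]
      rw [intervalIntegral.integral_const_mul, intid]
    rw [hid] at hmono
    have hq : ((d/2)^2 - 0^2)/2 ≤ 1/2 := by nlinarith
    have hfin : mu1N d h * 2^(m+1) * (((d/2)^2 - 0^2)/2) ≤ 25 * 2^(m+1) * (1/2) := by
      apply mul_le_mul (mul_le_mul_of_nonneg_right S.hmuu (by positivity)) hq
      · nlinarith
      · positivity
    have he : (25:ℝ) * 2^(m+1) * (1/2) = 25 * 2^m := by rw [pow_succ]; ring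
    linarith [hfin, he ▸ hfin]
  have hright : (∫ t in (d/2)..d, derivWithin φ (Icc 0 d) t) ≤ Y := by
    have hmono : (∫ t in (d/2)..d, derivWithin φ (Icc 0 d) t) ≤ ∫ _t in (d/2)..d, Y := by
      apply intervalIntegral.integral_mono_on (by linarith)
        (ii S.contdphi hd2m S.memd) intervalIntegrable_const
      intro t ht
      rcases eq_or_lt_of_le ht.2 with h1 | h1
      · rw [h1, S.dphid]
        exact hY0.le
      · have ht0 : 0 < t := lt_of_lt_of_le (by linarith) ht.1
        exact hkey t ⟨ht0, h1⟩ ht.1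
    rw [intervalIntegral.integral_const, smul_eq_mul] at hmono
    have : (d - d/2) * Y ≤ 1 * Y := by
      apply mul_le_mul_of_nonneg_right _ hY0.le
      linarith
    linarith
  rw [S.phi0] at hrise
  have hfin : B + 1 ≤ 25 * 2^m + Y := by
    have : B - (-1) = (∫ t in (0:ℝ)..(d/2), derivWithin φ (Icc 0 d) t)
        + (∫ t in (d/2)..d, derivWithin φ (Icc 0 d) t) := by
      rw [hsplit, ← hrise]
    linarith [hleft, hright]
  have hCBbig : (100:ℝ) * 2^(m+2) ≤ ((100:ℝ) * 2^(m+2))^(m+2) :=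
    le_self_pow₀ (by nlinarith) (by omega)
  have hBbig : 50*2^m + 2 < B := by
    have e : (100:ℝ)*2^(m+2) = 400*2^m := by
      rw [pow_succ, pow_succ]; ring
    nlinarith [hcon, hCBbig]
  linarith [hfin, hY_lt, hBbig]

lemma lowerQ (S : Setup m d h φ) :
    (∫ t in (0:ℝ)..d, h t) / (4*(5*2^(m+2))^(m+2)) ≤ ∫ t in (0:ℝ)..d, h t * (φ t)^2 := by
  have hd0 := S.hd0
  have hd2 := S.hd2
  set η : ℝ := 1/(5*2^(m+1)) with hηdef
  have hη0 : 0 < η := by rw [hηdef]; positivity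
  set δ : ℝ := min (d/2) η with hδdef
  have hδ0 : 0 < δ := lt_min (by linarith) hη0
  have hδd2 : δ ≤ d/2 := min_le_left _ _
  have hδd : δ ≤ d := by linarith
  have hδm : δ ∈ Icc 0 d := ⟨hδ0.le, hδd⟩
  -- φ ≤ -1/2 on [0, δ]
  have hφhalf : ∀ x ∈ Icc (0:ℝ) δ, φ x ≤ -(1/2) := by
    intro x hx
    have hxd2 : x ≤ d/2 := hx.2.trans hδd2
    have hxm : x ∈ Icc 0 d := ⟨hx.1, by linarith⟩
    have hdiff := S.phidiff (le_refl (0:ℝ)) hx.1 hxm.2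
    have hmono : (∫ t in (0:ℝ)..x, derivWithin φ (Icc 0 d) t)
        ≤ ∫ t in (0:ℝ)..x, mu1N d h * 2^(m+1) * t := by
      apply intervalIntegral.integral_mono_on hx.1
        (ii S.contdphi S.mem0 hxm)
        ((continuous_const.mul continuous_id).intervalIntegrable _ _)
      intro t ht
      rcases eq_or_lt_of_le ht.1 with h0 | h0
      · rw [← h0, S.dphi0]
        simp
      · exact S.bound1 ⟨h0, by linarith [ht.2.trans hxd2]⟩ (ht.2.trans hxd2)
    have hid : (∫ t in (0:ℝ)..x, mu1N d h * 2^(m+1) * t)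
        = mu1N d h * 2^(m+1) * ((x^2 - 0^2)/2) := by
      rw [show (fun t => mu1N d h * 2^(m+1) * t) = fun t => (mu1N d h * 2^(m+1)) * t from rfl]
      rw [intervalIntegral.integral_const_mul, intid]
    rw [hid] at hmono
    have hxη : x ≤ η := hx.2.trans (min_le_right _ _)
    have hsmall : mu1N d h * 2^(m+1) * ((x^2 - 0^2)/2) ≤ 1/2 := by
      have hx2 : x^2 ≤ η^2 := by nlinarith [hx.1]
      have hη2 : η^2 ≤ 1/(25*2^(m+1)) := by
        rw [hηdef]
        rw [div_pow, one_pow]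
        rw [div_le_div_iff₀ (by positivity) (by positivity)]
        have : ((5:ℝ)*2^(m+1))^2 = 25 * (2^(m+1) * 2^(m+1)) := by ring
        rw [this]
        have h1 : (1:ℝ) ≤ 2^(m+1) := one_le_pow₀ one_le_two
        nlinarith [pow_pos (zero_lt_two (α:=ℝ)) (m+1)]
      have hμ25 := S.hmuu
      have hμ0 := S.mu_pos
      have hp0 : (0:ℝ) < 2^(m+1) := by positivity
      have step : mu1N d h * 2^(m+1) * ((x^2-0^2)/2) ≤ 25 * 2^(m+1) * (η^2/2) := by
        apply mul_le_mul (mul_le_mul_of_nonneg_right hμ25 hp0.le)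
        · nlinarith
        · nlinarith [sq_nonneg x]
        · positivity
      have step2 : (25:ℝ) * 2^(m+1) * (η^2/2) ≤ 1/2 := by
        have := mul_le_mul_of_nonneg_left hη2 (by positivity : (0:ℝ) ≤ 25 * 2^(m+1) / 2)
        calc (25:ℝ) * 2^(m+1) * (η^2/2) = 25 * 2^(m+1)/2 * η^2 := by ring
          _ ≤ 25 * 2^(m+1)/2 * (1/(25*2^(m+1))) := by
              apply mul_le_mul_of_nonneg_left hη2 (by positivity)
          _ = 1/2 := by field_simp
      linarith
    have hφ0 := S.phi0
    linarith [hdiff, hmono, hsmall]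
  -- Q ≥ ∫₀^δ h φ² ≥ (1/4) H(δ) ≥ (1/4)(δ/d)^{m+2} V
  have hsplitQ : (∫ t in (0:ℝ)..δ, h t * (φ t)^2) + (∫ t in δ..d, h t * (φ t)^2)
      = ∫ t in (0:ℝ)..d, h t * (φ t)^2 :=
    intervalIntegral.integral_add_adjacent_intervals
      (ii (S.hcont.mul (S.contphi.pow 2)) S.mem0 hδm)
      (ii (S.hcont.mul (S.contphi.pow 2)) hδm S.memd)
  have htail : 0 ≤ ∫ t in δ..d, h t * (φ t)^2 :=
    intervalIntegral.integral_nonneg hδd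
      (fun t ht => mul_nonneg (S.hnn t ⟨hδ0.le.trans ht.1, ht.2⟩) (sq_nonneg _))
  have hhead : (1/4) * (∫ t in (0:ℝ)..δ, h t) ≤ ∫ t in (0:ℝ)..δ, h t * (φ t)^2 := by
    have hmono : (∫ t in (0:ℝ)..δ, h t * (1/4)) ≤ ∫ t in (0:ℝ)..δ, h t * (φ t)^2 := by
      apply intervalIntegral.integral_mono_on hδ0.le
        (ii (S.hcont.mul continuousOn_const) S.mem0 hδm)
        (ii (S.hcont.mul (S.contphi.pow 2)) S.mem0 hδm)
      intro t ht
      have hsq : (1/4:ℝ) ≤ (φ t)^2 := by nlinarith [hφhalf t ht]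
      exact mul_le_mul_of_nonneg_left hsq (S.hnn t ⟨ht.1, ht.2.trans hδd⟩)
    rw [intervalIntegral.integral_mul_const] at hmono
    linarith
  have hmass := mass S.hd0 S.hcont S.hnn
    (fun {a b} ha hab hb => P1 S.hnn S.hconc ha hab hb) hδ0 hδd
  have hVnn : 0 ≤ ∫ t in (0:ℝ)..d, h t :=
    intervalIntegral.integral_nonneg hd0.le (fun t ht => S.hnn t ht)
  have hratio : 1/(5*2^(m+2)) ≤ δ/d := by
    rcases min_cases (d/2) η with ⟨he, _⟩ | ⟨he, hle⟩
    · rw [hδdef, he]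
      have h1 : (1:ℝ) ≤ 2^(m+2) := one_le_pow₀ one_le_two
      rw [div_le_div_iff₀ (by positivity) hd0]
      nlinarith
    · rw [hδdef, he, hηdef]
      have h1 : (0:ℝ) < 2^(m+1) := by positivity
      rw [div_le_div_iff₀ (by positivity) hd0]
      have e : (5:ℝ)*2^(m+2) = 2*(5*2^(m+1)) := by rw [pow_succ]; ring
      rw [e]
      have hprod : (1:ℝ)/(5*2^(m+1)) * (2*(5*2^(m+1))) = 2 := by
        field_simp
      rw [hprod]
      linarith
  have hpow : (1/(5*2^(m+2)))^(m+2) ≤ (δ/d)^(m+2) :=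
    pow_le_pow_left₀ (by positivity) hratio (m+2)
  have hchain : (1/(5*2^(m+2)))^(m+2) * (∫ t in (0:ℝ)..d, h t)
      ≤ ∫ t in (0:ℝ)..δ, h t := by
    calc (1/(5*2^(m+2)))^(m+2) * (∫ t in (0:ℝ)..d, h t)
        ≤ (δ/d)^(m+2) * (∫ t in (0:ℝ)..d, h t) := mul_le_mul_of_nonneg_right hpow hVnn
      _ ≤ ∫ t in (0:ℝ)..δ, h t := hmass
  have hfinal : (∫ t in (0:ℝ)..d, h t) / (4*(5*2^(m+2))^(m+2))
      = (1/4) * ((1/(5*2^(m+2)))^(m+2) * (∫ t in (0:ℝ)..d, h t)) := by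
    rw [div_pow, one_pow]
    field_simp
  rw [hfinal]
  have h4 : (1/4) * ((1/(5*2^(m+2)))^(m+2) * (∫ t in (0:ℝ)..d, h t))
      ≤ (1/4) * (∫ t in (0:ℝ)..δ, h t) :=
    mul_le_mul_of_nonneg_left hchain (by norm_num)
  linarith [hhead, htail, hsplitQ]

end Setup

end Lemma35

/-- Lemma 3.5: there is a constant `C > 0` depending only on `n = m + 2` such that, in the
setting of the weighted Neumann ODE with weight `h` (with `V(Ω) = ∫₀^d h`),
`C⁻¹ V(Ω) ≤ ∫₀^d h φ² ≤ C V(Ω)` and `C⁻¹ V(Ω) ≤ ∫₀^d h (φ')² ≤ C V(Ω)`. -/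
theorem statement7 (m : ℕ) :
    ∃ C > (0 : ℝ), ∀ (d : ℝ) (h φ : ℝ → ℝ),
      0 < d → d ≤ 2 →
      ContinuousOn h (Icc 0 d) →
      (∀ x ∈ Icc 0 d, 0 ≤ h x) →
      (∀ x ∈ Ioo 0 d, 0 < h x) →
      ConcaveOn ℝ (Icc 0 d) (fun x => h x ^ ((1 : ℝ) / (m + 1))) →
      π ^ 2 / 4 ≤ mu1N d h → mu1N d h ≤ 25 →
      IsNeumannODESol d h φ →
      (C⁻¹ * (∫ x in (0:ℝ)..d, h x) ≤ ∫ x in (0:ℝ)..d, h x * (φ x) ^ 2 ∧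
        (∫ x in (0:ℝ)..d, h x * (φ x) ^ 2) ≤ C * ∫ x in (0:ℝ)..d, h x) ∧
      (C⁻¹ * (∫ x in (0:ℝ)..d, h x) ≤
          ∫ x in (0:ℝ)..d, h x * (derivWithin φ (Icc 0 d) x) ^ 2 ∧
        (∫ x in (0:ℝ)..d, h x * (derivWithin φ (Icc 0 d) x) ^ 2) ≤
          C * ∫ x in (0:ℝ)..d, h x) := by
  classical
  refine ⟨25 * (((100:ℝ) * 2^(m+2))^(m+2))^2 * (4*(5*2^(m+2))^(m+2)), by positivity, ?_⟩
  intro d h φ hd0 hd2 hcont hnn hpos hconc hml hmu hsol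
  have S : Lemma35.Setup m d h φ := ⟨hd0, hd2, hcont, hnn, hpos, hconc, hml, hmu, hsol⟩
  set CB : ℝ := ((100:ℝ) * 2^(m+2))^(m+2) with hCBdef
  set CQ : ℝ := 4*(5*2^(m+2))^(m+2) with hCQdef
  set C : ℝ := 25 * CB^2 * CQ with hCdef
  have h2p : (1:ℝ) ≤ 2^(m+2) := one_le_pow₀ one_le_two
  have hCB1 : (1:ℝ) ≤ CB := by
    rw [hCBdef]
    exact one_le_pow₀ (by nlinarith)
  have hCQ1 : (1:ℝ) ≤ CQ := by
    rw [hCQdef]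
    have h5 : (1:ℝ) ≤ (5*2^(m+2))^(m+2) := one_le_pow₀ (by nlinarith)
    linarith
  have hCQ0 : (0:ℝ) < CQ := by linarith
  have hC0 : (0:ℝ) < C := by
    rw [hCdef]
    nlinarith
  have hVpos : 0 < ∫ x in (0:ℝ)..d, h x := Lemma35.Vpos hd0 hcont hpos
  have hQnn : 0 ≤ ∫ x in (0:ℝ)..d, h x * (φ x)^2 :=
    intervalIntegral.integral_nonneg hd0.le
      (fun t ht => mul_nonneg (hnn t ht) (sq_nonneg _))
  have hQle : (∫ x in (0:ℝ)..d, h x * (φ x)^2) ≤ CB^2 * ∫ x in (0:ℝ)..d, h x := by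
    have key : ∀ t ∈ Icc 0 d, h t * (φ t)^2 ≤ CB^2 * h t := by
      intro t ht
      have h1 := S.phi_lb t ht
      have h2 := (S.phi_ub t ht).trans S.B_bound
      have habs : (φ t)^2 ≤ CB^2 := by nlinarith [hCB1]
      calc h t * (φ t)^2 ≤ h t * CB^2 := mul_le_mul_of_nonneg_left habs (hnn t ht)
        _ = CB^2 * h t := by ring
    have hmono := intervalIntegral.integral_mono_on hd0.le
      (Lemma35.ii (hcont.mul (S.contphi.pow 2)) S.mem0 S.memd)
      ((Lemma35.ii hcont S.mem0 S.memd).const_mul _) key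
    rwa [intervalIntegral.integral_const_mul] at hmono
  have hQge : (∫ x in (0:ℝ)..d, h x) / CQ ≤ ∫ x in (0:ℝ)..d, h x * (φ x)^2 := S.lowerQ
  have hEQ : (∫ x in (0:ℝ)..d, h x * (derivWithin φ (Icc 0 d) x)^2)
      = mu1N d h * ∫ x in (0:ℝ)..d, h x * (φ x)^2 :=
    S.Epartial S.memd (by simp [S.dphid])
  have hmu2 : 2 ≤ mu1N d h := S.mu_ge
  have hCQC : CQ ≤ C := by
    rw [hCdef]
    have h1 : (1:ℝ) ≤ 25*CB^2 := by nlinarith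
    have h2 : (1:ℝ)*CQ ≤ (25*CB^2)*CQ := mul_le_mul_of_nonneg_right h1 hCQ0.le
    linarith
  have hlow : C⁻¹ * (∫ x in (0:ℝ)..d, h x) ≤ (∫ x in (0:ℝ)..d, h x) / CQ := by
    rw [inv_mul_eq_div]
    exact div_le_div_of_nonneg_left hVpos.le hCQ0 hCQC
  refine ⟨⟨?_, ?_⟩, ?_, ?_⟩
  · exact hlow.trans hQge
  · have h1 : CB^2 ≤ C := by
      rw [hCdef]
      nlinarith
    nlinarith [hQle, hVpos.le]
  · have h1 : (∫ x in (0:ℝ)..d, h x * (φ x)^2)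
        ≤ ∫ x in (0:ℝ)..d, h x * (derivWithin φ (Icc 0 d) x)^2 := by
      rw [hEQ]
      nlinarith [hQnn]
    linarith [hlow.trans hQge]
  · rw [hEQ]
    have h1 : mu1N d h * (∫ x in (0:ℝ)..d, h x * (φ x)^2)
        ≤ 25 * (CB^2 * ∫ x in (0:ℝ)..d, h x) := by
      have := S.hmuu
      nlinarith [hQle, hQnn]
    have h2 : 25 * (CB^2 * ∫ x in (0:ℝ)..d, h x) ≤ C * ∫ x in (0:ℝ)..d, h x := by
      rw [hCdef]
      nlinarith [hVpos.le]
    linarith
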